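/- arXiv:1005.0531 — 2 statements merged into one kernel-verified Lean document; each statement's English description precedes it below -/
import Mathlib

section
/- Let f : X → Y be an étale morphism of schemes with X affine and Y separated. Then there exists an open affine cover {V_i} of Y such that each preimage f^{-1}(V_i) is affine. -/
open AlgebraicGeometry CategoryTheory CategoryTheory.Limits

lemma isAffineHom_of_isAffine_of_isSeparated {X Y : Scheme} (f : X ⟶ Y)
    [Y.IsSeparated] [IsAffine X] : IsAffineHom f := by
  have h : MorphismProperty.HasOfPostcompProperty
      @IsAffineHom @AlgebraicGeometry.IsSeparated := by
    have := isAffineHom_isStableUnderBaseChange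
    apply MorphismProperty.hasOfPostcompProperty_iff_le_diagonal.mpr
    intro A B g hg
    have : IsSeparated g := hg
    show IsAffineHom (pullback.diagonal g)
    infer_instance
  refine MorphismProperty.of_postcomp (W := @IsAffineHom)
    (W' := @AlgebraicGeometry.IsSeparated) f (terminal.from Y) inferInstance ?_
  rw [terminal.comp_from]
  infer_instance

/-- Let `f : X ⟶ Y` be an étale morphism of schemes with `X` affine and
`Y` separated. Then there is an open affine cover `{V}` of `Y` (i.e. every point of `Y`
lies in some affine open `V`) such that each preimage `f ⁻¹ᵁ V` is affine. -/
theorem etale_affine_to_separated_exists_affine_cover_with_affine_preimages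
    {X Y : Scheme} (f : X ⟶ Y) [Etale f] [Y.IsSeparated] [IsAffine X] :
    ∀ y : Y, ∃ V : Y.Opens, y ∈ V ∧ IsAffineOpen V ∧ IsAffineOpen (f ⁻¹ᵁ V) := by
  have := isAffineHom_of_isAffine_of_isSeparated f
  intro y
  obtain ⟨_, ⟨V, hV, rfl⟩, hyV, -⟩ :=
    Y.isBasis_affineOpens.exists_subset_of_mem_open (Set.mem_univ y) isOpen_univ
  exact ⟨V, hyV, hV, hV.preimage f⟩
end

section
/- Let X be a scheme with normal crossing singularities over a field k whose torsion subsheaf of differentials is τ_X, and let π : X̃ → X be the normalization. Then τ_X equals the kernel of the natural map Ω_X → π_* Ω_{X̃}; i.e., a local section of Ω_X is torsion if and only if it pulls back to zero on the normalization. -/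
universe u

open KaehlerDifferential TensorProduct

/-- The completion of `A` at a maximal ideal `m` is of normal crossing type in `n`
variables: it is isomorphic to `(A/m)[[x₁,…,xₙ]]/(x₁⋯x_{r(m)})` for some `r(m)`. -/
def NormalCrossingCompletion (A : Type u) [CommRing A] (n : ℕ) (m : Ideal A)
    (_ : m.IsMaximal) : Prop :=
  ∃ r : ℕ, r ≤ n ∧
    Nonempty (AdicCompletion m A ≃+*
      (MvPowerSeries (Fin n) (A ⧸ m) ⧸
        (Ideal.span {∏ i ∈ Finset.univ.filter (fun i : Fin n => (i : ℕ) < r),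
          MvPowerSeries.X i} : Ideal (MvPowerSeries (Fin n) (A ⧸ m)))))

section Aux

variable {A : Type u} [CommRing A]

/-- In a reduced ring, every element of a minimal prime is killed by something
outside the prime. -/
lemma exists_mul_eq_zero_of_mem_minimalPrimes [IsReduced A] {P : Ideal A}
    (hP : P ∈ minimalPrimes A) {p : A} (hp : p ∈ P) : ∃ s ∉ P, s * p = 0 := by
  haveI : P.IsPrime := hP.1.1
  have h1 : IsNilpotent (algebraMap A (Localization.AtPrime P) p) :=
by
    have hmem : algebraMap A (Localization.AtPrime P) p ∈
        ((⊥ : Ideal A).map (algebraMap A (Localization.AtPrime P))).radical := by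
      rw [IsLocalization.AtPrime.radical_map_of_mem_minimalPrimes (Localization.AtPrime P) P ⊥ hP]
      exact Ideal.mem_map_of_mem _ hp
    rw [Ideal.map_bot] at hmem
    obtain ⟨N, hN⟩ := hmem
    exact ⟨N, by simpa using hN⟩
  have h2 : algebraMap A (Localization.AtPrime P) p = 0 := h1.eq_zero
  obtain ⟨s, hs⟩ := (IsLocalization.map_eq_zero_iff P.primeCompl _ p).mp h2
  exact ⟨s.1, s.2, hs⟩

lemma exists_smul_eq_zero_of_mem_smul_top [IsReduced A] {P : Ideal A}
    (hP : P ∈ minimalPrimes A) {M : Type u} [AddCommGroup M] [Module A M]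
    {z : M} (hz : z ∈ P • (⊤ : Submodule A M)) : ∃ s ∉ P, s • z = 0 := by
  haveI : P.IsPrime := hP.1.1
  refine Submodule.smul_induction_on hz ?_ ?_
  · intro p hp m _
    obtain ⟨s, hsP, hs⟩ := exists_mul_eq_zero_of_mem_minimalPrimes hP hp
    exact ⟨s, hsP, by rw [smul_smul, hs, zero_smul]⟩
  · rintro z₁ z₂ ⟨s₁, hs₁P, hs₁⟩ ⟨s₂, hs₂P, hs₂⟩
    refine ⟨s₁ * s₂, fun h => ((Ideal.IsPrime.mem_or_mem ‹_› h).elim hs₁P hs₂P), ?_⟩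
    rw [smul_add, mul_comm, mul_smul, hs₁, smul_zero, mul_comm, mul_smul, hs₂, smul_zero,
      add_zero]

/-- A projective module over a domain is torsion-free. -/
lemma noZeroSMulDivisors_of_projective {R : Type u} [CommRing R] [IsDomain R]
    {M : Type u} [AddCommGroup M] [Module R M] [Module.Projective R M] :
    NoZeroSMulDivisors R M := by
  obtain ⟨s, hs⟩ := Module.projective_def.mp ‹Module.Projective R M›
  constructor
  intro a x h
  have h1 : a • s x = 0 := by rw [← map_smul, h, map_zero]
  rcases smul_eq_zero.mp h1 with h2 | h2
  · exact Or.inl h2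
  · refine Or.inr ?_
    have := hs x
    rw [h2, map_zero] at this
    exact this.symm

variable {k : Type u} [Field k] [Algebra k A]

/-- If a Kähler differential dies in a smooth quotient by a minimal prime,
it is killed by an element outside that prime. -/
lemma exists_smul_eq_zero_of_map_eq_zero [IsReduced A] {P : Ideal A}
    (hP : P ∈ minimalPrimes A) (x : Ω[A⁄k])
    (hx : KaehlerDifferential.map k k A (A ⧸ P) x = 0) :
    ∃ s ∉ P, s • x = 0 := by
  haveI : P.IsPrime := hP.1.1
  have hsurj : Function.Surjective (algebraMap A (A ⧸ P)) := by
    rw [Ideal.Quotient.algebraMap_eq]; exact Ideal.Quotient.mk_surjective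
  have hker : RingHom.ker (algebraMap A (A ⧸ P)) = P := by
    rw [Ideal.Quotient.algebraMap_eq, Ideal.mk_ker]
  have h1 : KaehlerDifferential.mapBaseChange k A (A ⧸ P) (1 ⊗ₜ x) = 0 := by
    rw [mapBaseChange_tmul, hx, smul_zero]
  obtain ⟨y, hy⟩ :=
    (KaehlerDifferential.exact_kerCotangentToTensor_mapBaseChange k A (A ⧸ P) hsurj
      ((1 : A ⧸ P) ⊗ₜ x)).mp h1
  obtain ⟨w, rfl⟩ := Ideal.toCotangent_surjective _ y
  rw [kerCotangentToTensor_toCotangent] at hy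
  have hwP : w.1 ∈ P := hker.le w.2
  have h2 : ((1 : A ⧸ P) ⊗ₜ (x - D k A w.1) : (A ⧸ P) ⊗[A] Ω[A⁄k]) = 0 := by
    rw [tmul_sub, hy, sub_self]
  have h3 : x - D k A w.1 ∈ P • (⊤ : Submodule A (Ω[A⁄k])) := by
    rw [← Submodule.Quotient.mk_eq_zero]
    have := congrArg (quotTensorEquivQuotSMul (Ω[A⁄k]) P) h2
    rwa [(quotTensorEquivQuotSMul (Ω[A⁄k]) P).map_zero, show (1 : A ⧸ P) = Ideal.Quotient.mk P 1 from rfl,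
      quotTensorEquivQuotSMul_mk_tmul, one_smul] at this
  obtain ⟨s₁, hs₁P, hs₁⟩ := exists_smul_eq_zero_of_mem_smul_top hP h3
  obtain ⟨s, hsP, hs⟩ := exists_mul_eq_zero_of_mem_minimalPrimes hP hwP
  have hDw : (s * s) • D k A w.1 = 0 := by
    have hl := (D k A).leibniz s w.1
    rw [hs, map_zero] at hl
    have h4 : s • D k A w.1 = -(w.1 • D k A s) := by
      rw [eq_neg_iff_add_eq_zero]; exact hl.symm
    rw [mul_smul, h4, smul_neg, smul_smul, hs, zero_smul, neg_zero]
  have e1 : (s₁ * (s * s)) • (x - D k A w.1) = 0 := by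
    rw [mul_comm, mul_smul, hs₁, smul_zero]
  have e2 : (s₁ * (s * s)) • D k A w.1 = 0 := by
    rw [mul_smul, hDw, smul_zero]
  refine ⟨s₁ * (s * s), fun hmem => ?_, ?_⟩
  · rcases Ideal.IsPrime.mem_or_mem ‹P.IsPrime› hmem with h | h
    · exact hs₁P h
    · exact (Ideal.IsPrime.mem_or_mem ‹P.IsPrime› h).elim hsP hsP
  · rw [show x = (x - D k A w.1) + D k A w.1 by abel, smul_add, e1, e2, add_zero]


lemma map_eq_zero_of_torsion [IsReduced A] {P : Ideal A}
    (hP : P ∈ minimalPrimes A) (hsm : Algebra.FormallySmooth k (A ⧸ P))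
    {x : Ω[A⁄k]} (hx : x ∈ Submodule.torsion A (Ω[A⁄k])) :
    KaehlerDifferential.map k k A (A ⧸ P) x = 0 := by
  haveI : P.IsPrime := hP.1.1
  haveI := hsm
  haveI : NoZeroSMulDivisors (A ⧸ P) (Ω[(A ⧸ P)⁄k]) := noZeroSMulDivisors_of_projective
  obtain ⟨a, ha⟩ := hx
  have h1 : (algebraMap A (A ⧸ P) a.1) • KaehlerDifferential.map k k A (A ⧸ P) x = 0 := by
    rw [algebraMap_smul, ← map_smul, show ((a : A) • x) = 0 from ha, map_zero]
  rcases smul_eq_zero.mp h1 with h2 | h2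
  · exfalso
    have haP : a.1 ∈ P := by
      rwa [Ideal.Quotient.algebraMap_eq, ← RingHom.mem_ker, Ideal.mk_ker] at h2
    obtain ⟨s, hsP, hs⟩ := exists_mul_eq_zero_of_mem_minimalPrimes hP haP
    exact hsP (mem_nonZeroDivisors_iff_right.mp a.2 s hs ▸ P.zero_mem)
  · exact h2

end Aux

/-- Let `X = Spec A` be a (reduced, finite type) scheme with normal
crossing singularities over a field `k`, with normalization `π : X̃ → X`, where
`X̃ = ⊔ᵢ Spec (A/Pᵢ)` is the disjoint union of the (smooth) irreducible components,
`P₁,…,P_m` being the minimal primes of `A`.  Then the torsion subsheaf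
`τ_X ⊆ Ω_X` is exactly the kernel of the natural map `Ω_X → π_* Ω_{X̃}`: a section of
`Ω_X` is torsion if and only if it pulls back to zero on the normalization. -/



theorem torsion_eq_ker_map_to_normalization
    (k : Type u) [Field k] [IsAlgClosed k]
    (A : Type u) [CommRing A] [Algebra k A] [Algebra.FiniteType k A] [IsReduced A]
    (n : ℕ)
    (hnc : ∀ (m : Ideal A) (hm : m.IsMaximal), NormalCrossingCompletion A n m hm)
    {m : ℕ} (P : Fin m → Ideal A)
    (hP : ∀ i, P i ∈ minimalPrimes A)
    (hPall : ∀ q ∈ minimalPrimes A, ∃ i, P i = q)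
    (hsmooth : ∀ i, Algebra.Smooth k (A ⧸ P i)) :
    Submodule.torsion A (Ω[A⁄k]) =
      LinearMap.ker (LinearMap.pi fun i => KaehlerDifferential.map k k A (A ⧸ P i)) := by
  ext x
  rw [LinearMap.mem_ker]
  constructor
  · intro hx
    funext i
    simpa only [LinearMap.pi_apply, Pi.zero_apply] using
      map_eq_zero_of_torsion (hP i) (hsmooth i).formallySmooth hx
  · intro hx
    have hxi : ∀ i, KaehlerDifferential.map k k A (A ⧸ P i) x = 0 := fun i => by
      simpa only [LinearMap.pi_apply, Pi.zero_apply] using congrFun hx i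
    choose s hsP hs using fun i => exists_smul_eq_zero_of_map_eq_zero (hP i) x (hxi i)
    set J : Ideal A := LinearMap.ker (LinearMap.toSpanSingleton A _ x) with hJ
    have hsJ : ∀ i, s i ∈ J := fun i => by
      simp only [hJ, LinearMap.mem_ker, LinearMap.toSpanSingleton_apply]
      exact hs i
    obtain ⟨a, haJ, haP⟩ : ∃ a ∈ J, ∀ i, a ∉ P i := by
      rcases isEmpty_or_nonempty (Fin m) with hm | hm
      · exact ⟨0, J.zero_mem, fun i => (hm.false i).elim⟩
      · obtain ⟨i₀⟩ := hm
        have hiff := Ideal.subset_union_prime (s := (Finset.univ : Finset (Fin m)))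
          (f := P) i₀ i₀ (fun i _ _ _ => (hP i).1.1) (I := J)
        have hU : ¬ ((J : Set A) ⊆
            ⋃ i ∈ ((Finset.univ : Finset (Fin m)) : Set (Fin m)), (P i : Set A)) := fun hsub => by
          obtain ⟨i, -, hle⟩ := hiff.mp hsub
          exact hsP i (hle (hsJ i))
        obtain ⟨a, haJ, haU⟩ := Set.not_subset.mp hU
        refine ⟨a, haJ, fun i hi => haU ?_⟩
        exact Set.mem_biUnion (Finset.mem_coe.mpr (Finset.mem_univ i)) hi
    have ha0 : a ∈ nonZeroDivisors A := by
      refine mem_nonZeroDivisors_iff_right.mpr fun b hb => ?_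
      have hball : ∀ Q ∈ minimalPrimes A, b ∈ Q := by
        intro Q hQ
        obtain ⟨i, rfl⟩ := hPall Q hQ
        haveI : (P i).IsPrime := (hP i).1.1
        rcases Ideal.IsPrime.mem_or_mem ‹(P i).IsPrime›
          (show b * a ∈ P i by rw [hb]; exact (P i).zero_mem) with h | h
        · exact h
        · exact absurd h (haP i)
      have h1 : b ∈ sInf (minimalPrimes A) := Submodule.mem_sInf.mpr fun Q hQ => hball Q hQ
      have h2 : sInf (minimalPrimes A) = ⊥ := by
        rw [show minimalPrimes A = (⊥ : Ideal A).minimalPrimes from rfl,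
          Ideal.sInf_minimalPrimes, ← Submodule.zero_eq_bot]
        exact nilradical_eq_zero A
      rw [h2] at h1
      exact (Submodule.mem_bot A).mp h1
    exact (Submodule.mem_torsion_iff x).mpr
      ⟨⟨a, ha0⟩, by simpa [hJ, LinearMap.toSpanSingleton_apply] using haJ⟩
end
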